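/- arXiv:2303.04239 — 5 statements merged into one kernel-verified Lean document; each statement's English description precedes it below -/
import Mathlib

section
/- Let P be a Markov transition kernel on (X, 𝓑) and suppose a measurable function V : X → [1, ∞) satisfies the Lyapunov–Foster drift condition PV(x) ≤ λ V(x) + b·1_C(x) for all x ∈ X, where 0 < λ < 1, b < ∞, and C ∈ 𝓑. Then for every r ∈ (1, 1/λ) and every x ∈ X, (𝔼_x[r^{τ_C}] − 1)/(r − 1) ≤ 𝔼_x[Σ_{k=0}^{τ_C − 1} V(Φ^k) r^k] ≤ ((1 + rb)/(1 − λ r)) V(x), where the middle and left expressions are interpreted in [0, ∞] (with r^{τ_C} = ∞ when τ_C = ∞). -/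
/-!
Statement 2 (Theorem 15.2.5 of Meyn–Tweedie): under the Lyapunov–Foster drift condition
`PV ≤ λ V + b 1_C`, for every `r ∈ (1, 1/λ)` and every `x`,
`(𝔼_x[r^{τ_C}] - 1)/(r - 1) ≤ 𝔼_x[Σ_{k=0}^{τ_C - 1} V(Φ^k) r^k] ≤ ((1 + r b)/(1 - λ r)) V(x)`,
all quantities valued in `[0,∞]`.

The law-of-the-chain quantities are expressed through the standard kernel recursions:
* `tauEqProb P B n x = ℙ_x {τ_B = n}` (probability that the first hitting time of `B` is `n`),
* `expRtau P B r x = 𝔼_x[r^{τ_B}]` (with `r^∞ = ∞` when `τ_B = ∞`),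
* `tabooExp P B V k x = 𝔼_x[V(Φ^k) 1{τ_B > k}] = 𝔼_x[V(Φ^k) 1{Φ^1,…,Φ^k ∉ B}]`, so that
  `∑' k, r^k * tabooExp P B V k x = 𝔼_x[Σ_{k=0}^{τ_B - 1} V(Φ^k) r^k]`.
-/

open MeasureTheory ProbabilityTheory ENNReal

/-- `ℙ_x {τ_B = n}` for the chain with transition kernel `P`:
`ℙ_x {τ_B = 1} = P(x,B)` and `ℙ_x {τ_B = n+1} = ∫_{Bᶜ} P(x,dy) ℙ_y {τ_B = n}`. -/
noncomputable def tauEqProb {X : Type*} [MeasurableSpace X] (P : Kernel X X) (B : Set X) :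
    ℕ → X → ℝ≥0∞
  | 0, _ => 0
  | 1, x => P x B
  | n + 2, x => ∫⁻ y in Bᶜ, tauEqProb P B (n + 1) y ∂(P x)

/-- `𝔼_x[r^{τ_B}] ∈ [0,∞]`, where `r^{τ_B} = ∞` on the event `{τ_B = ∞}`. -/
noncomputable def expRtau {X : Type*} [MeasurableSpace X] (P : Kernel X X) (B : Set X)
    (r : ℝ≥0∞) (x : X) : ℝ≥0∞ :=
  (∑' n : ℕ, r ^ n * tauEqProb P B n x) + ∞ * (1 - ∑' n : ℕ, tauEqProb P B n x)

/-- `𝔼_x[V(Φ^k) 1{Φ^1, …, Φ^k ∉ B}]`, i.e. the expectation of `V(Φ^k)` on `{τ_B > k}`. -/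
noncomputable def tabooExp {X : Type*} [MeasurableSpace X] (P : Kernel X X) (B : Set X)
    (V : X → ℝ≥0∞) : ℕ → X → ℝ≥0∞
  | 0, x => V x
  | k + 1, x => ∫⁻ y in Bᶜ, tabooExp P B V k y ∂(P x)

/-!
Lower bound: `rⁿ = 1 + (r - 1) ∑_{k<n} rᵏ`, so `𝔼_x[r^{τ_C}] ≤ 1 + (r - 1) ∑_k rᵏ ℙ_x{τ_C > k}`,
and `ℙ_x{τ_C > k} ≤ 𝔼_x[V(Φᵏ); τ_C > k]` because `V ≥ 1`.

Upper bound: off `C` the drift condition reads `PV ≤ λ V`, so each further step spent outside `C`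
contracts the taboo expectations by `λ`: `𝔼_x[V(Φ^{k+1}); τ_C > k + 1] ≤ λᵏ (λ V(x) + b)`.
Summing the geometric series gives `V(x) + r (λ V(x) + b) / (1 - λ r) ≤ (1 + r b) / (1 - λ r) V(x)`.
-/

section SurvivalSums

variable {p T : ℕ → ℝ≥0∞} {r : ℝ≥0∞}

/-- Here `p n` plays `ℙ{τ = n}` and `T k` plays `ℙ{τ > k}`. -/
theorem sum_pow_mul_add_pow_mul_eq (h0 : p 0 + T 0 = 1)
    (hstep : ∀ k, p (k + 1) + T (k + 1) = T k) (hr : 1 ≤ r) (N : ℕ) :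
    ∑ n ∈ Finset.range (N + 1), r ^ n * p n + r ^ N * T N
      = 1 + (r - 1) * ∑ k ∈ Finset.range N, r ^ k * T k := by
  induction N with
  | zero => simpa using h0
  | succ N ih =>
    have hpow : r ^ (N + 1) = r ^ N + (r - 1) * r ^ N := by
      rw [pow_succ, ← one_add_mul, add_tsub_cancel_of_le hr, mul_comm]
    calc ∑ n ∈ Finset.range (N + 2), r ^ n * p n + r ^ (N + 1) * T (N + 1)
        = ∑ n ∈ Finset.range (N + 1), r ^ n * p n + r ^ (N + 1) * (p (N + 1) + T (N + 1)) := by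
          rw [Finset.sum_range_succ _ (N + 1)]; ring
      _ = ∑ n ∈ Finset.range (N + 1), r ^ n * p n + r ^ N * T N + (r - 1) * (r ^ N * T N) := by
          rw [hstep, hpow]; ring
      _ = 1 + (r - 1) * ∑ k ∈ Finset.range (N + 1), r ^ k * T k := by
          rw [ih, Finset.sum_range_succ]; ring

theorem sum_range_add_eq_one (h0 : p 0 + T 0 = 1) (hstep : ∀ k, p (k + 1) + T (k + 1) = T k)
    (N : ℕ) : ∑ n ∈ Finset.range (N + 1), p n + T N = 1 := by
  simpa using sum_pow_mul_add_pow_mul_eq h0 hstep le_rfl N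

theorem tsum_pow_mul_add_top_mul_le (h0 : p 0 + T 0 = 1)
    (hstep : ∀ k, p (k + 1) + T (k + 1) = T k) (hr : 1 < r) :
    ∑' n, r ^ n * p n + ∞ * (1 - ∑' n, p n) ≤ 1 + (r - 1) * ∑' k, r ^ k * T k := by
  rcases eq_or_ne (1 - ∑' n, p n) 0 with hdefect | hdefect
  · rw [hdefect, mul_zero, add_zero]
    refine ENNReal.tsum_le_of_sum_range_le fun N => ?_
    calc ∑ n ∈ Finset.range N, r ^ n * p n
        ≤ ∑ n ∈ Finset.range (N + 1), r ^ n * p n + r ^ N * T N :=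
          (Finset.sum_le_sum_of_subset (Finset.range_subset_range.2 N.le_succ)).trans le_self_add
      _ = 1 + (r - 1) * ∑ k ∈ Finset.range N, r ^ k * T k :=
          sum_pow_mul_add_pow_mul_eq h0 hstep hr.le N
      _ ≤ 1 + (r - 1) * ∑' k, r ^ k * T k := by gcongr; exact ENNReal.sum_le_tsum _
  · -- the defect `ℙ{τ = ∞}` bounds every `T k` from below, so the right side is infinite
    have hdefect_le : ∀ k, 1 - ∑' n, p n ≤ r ^ k * T k := fun k =>
      calc 1 - ∑' n, p n ≤ T k := by
            rw [tsub_le_iff_right, ← sum_range_add_eq_one h0 hstep k, add_comm (T k)]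
            gcongr ?_ + _
            exact ENNReal.sum_le_tsum _
        _ ≤ r ^ k * T k := le_mul_of_one_le_left' (one_le_pow₀ hr.le)
    have htop : ∑' k, r ^ k * T k = ∞ :=
      top_unique ((ENNReal.tsum_const_eq_top_of_ne_zero hdefect).ge.trans
        (ENNReal.tsum_le_tsum hdefect_le))
    rw [htop, mul_top (tsub_pos_of_lt hr).ne', add_top]
    exact le_top

end SurvivalSums

theorem add_mul_le_div_mul_of_one_le {v lam b r : ℝ≥0∞} (hv : 1 ≤ v) (hlr : lam * r < 1) :
    v + r * (lam * v + b) * (1 - lam * r)⁻¹ ≤ (1 + r * b) / (1 - lam * r) * v := by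
  have hd0 : 1 - lam * r ≠ 0 := (tsub_pos_of_lt hlr).ne'
  have hdtop : 1 - lam * r ≠ ∞ := (tsub_le_self.trans_lt one_lt_top).ne
  rw [← ENNReal.mul_div_right_comm, ENNReal.le_div_iff_mul_le (.inl hd0) (.inl hdtop), add_mul,
    mul_assoc, ENNReal.inv_mul_cancel hd0 hdtop, mul_one]
  calc v * (1 - lam * r) + r * (lam * v + b) = v * (1 - lam * r + lam * r) + r * b := by ring
    _ = v + r * b := by rw [tsub_add_cancel_of_le hlr.le, mul_one]
    _ ≤ v + r * b * v := by gcongr v + ?_; exact le_mul_of_one_le_right' hv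
    _ = (1 + r * b) * v := by ring

section Taboo

variable {X : Type*} [MeasurableSpace X] {P : Kernel X X} {C : Set X}

theorem measurable_tabooExp [IsSFiniteKernel P] (hC : MeasurableSet C) {V : X → ℝ≥0∞}
    (hV : Measurable V) (k : ℕ) : Measurable (tabooExp P C V k) := by
  induction k with
  | zero => exact hV
  | succ k ih => exact ih.setLIntegral_kernel hC.compl

theorem tabooExp_mono {V W : X → ℝ≥0∞} (h : V ≤ W) (k : ℕ) :
    tabooExp P C V k ≤ tabooExp P C W k := by
  induction k with
  | zero => exact h
  | succ k ih => exact fun x => lintegral_mono fun y => ih y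

theorem tauEqProb_succ_add_tabooExp_succ [IsMarkovKernel P] (hC : MeasurableSet C) (k : ℕ)
    (x : X) : tauEqProb P C (k + 1) x + tabooExp P C 1 (k + 1) x = tabooExp P C 1 k x := by
  induction k generalizing x with
  | zero =>
    change P x C + ∫⁻ _ in Cᶜ, 1 ∂(P x) = 1
    rw [setLIntegral_one, measure_add_measure_compl hC, measure_univ]
  | succ k ih =>
    change ∫⁻ y in Cᶜ, tauEqProb P C (k + 1) y ∂(P x)
        + ∫⁻ y in Cᶜ, tabooExp P C 1 (k + 1) y ∂(P x) = ∫⁻ y in Cᶜ, tabooExp P C 1 k y ∂(P x)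
    rw [← lintegral_add_right _ (measurable_tabooExp hC measurable_one (k + 1))]
    simp only [ih]

theorem expRtau_le_one_add_mul_tsum [IsMarkovKernel P] (hC : MeasurableSet C) {r : ℝ≥0∞}
    (hr : 1 < r) (x : X) :
    expRtau P C r x ≤ 1 + (r - 1) * ∑' k, r ^ k * tabooExp P C 1 k x :=
  tsum_pow_mul_add_top_mul_le (by simp [tauEqProb, tabooExp])
    (fun k => tauEqProb_succ_add_tabooExp_succ hC k x) hr

variable {V : X → ℝ≥0∞} {lam b c : ℝ≥0∞}

theorem tabooExp_one_le (hdrift : ∀ x, ∫⁻ y, V y ∂(P x) ≤ lam * V x + b * C.indicator 1 x)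
    (x : X) : tabooExp P C V 1 x ≤ lam * V x + b * C.indicator 1 x :=
  (setLIntegral_le_lintegral _ _).trans (hdrift x)

theorem tabooExp_succ_succ_le_of_notMem [IsSFiniteKernel P] (hC : MeasurableSet C)
    (hV : Measurable V) {k : ℕ}
    (h : ∀ y ∉ C, tabooExp P C V (k + 1) y ≤ c * tabooExp P C V k y) (x : X) :
    tabooExp P C V (k + 2) x ≤ c * tabooExp P C V (k + 1) x :=
  calc tabooExp P C V (k + 2) x = ∫⁻ y in Cᶜ, tabooExp P C V (k + 1) y ∂(P x) := rfl
    _ ≤ ∫⁻ y in Cᶜ, c * tabooExp P C V k y ∂(P x) :=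
        setLIntegral_mono ((measurable_tabooExp hC hV k).const_mul c) h
    _ = c * tabooExp P C V (k + 1) x := lintegral_const_mul c (measurable_tabooExp hC hV k)

theorem tabooExp_succ_succ_le [IsSFiniteKernel P] (hC : MeasurableSet C) (hV : Measurable V)
    (hdrift : ∀ x, ∫⁻ y, V y ∂(P x) ≤ lam * V x + b * C.indicator 1 x) (k : ℕ) (x : X) :
    tabooExp P C V (k + 2) x ≤ lam * tabooExp P C V (k + 1) x := by
  induction k generalizing x with
  | zero =>
    refine tabooExp_succ_succ_le_of_notMem hC hV (fun y hy => ?_) x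
    change tabooExp P C V 1 y ≤ lam * V y
    simpa [hy] using tabooExp_one_le hdrift y
  | succ k ih => exact tabooExp_succ_succ_le_of_notMem hC hV (fun y _ => ih y) x

theorem tabooExp_succ_le [IsSFiniteKernel P] (hC : MeasurableSet C) (hV : Measurable V)
    (hdrift : ∀ x, ∫⁻ y, V y ∂(P x) ≤ lam * V x + b * C.indicator 1 x) (k : ℕ) (x : X) :
    tabooExp P C V (k + 1) x ≤ lam ^ k * (lam * V x + b) := by
  induction k with
  | zero =>
    rw [pow_zero, one_mul]
    refine (tabooExp_one_le hdrift x).trans ?_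
    gcongr
    exact mul_le_of_le_one_right' (Set.indicator_le_self' (fun _ _ => zero_le_one) x)
  | succ k ih =>
    calc tabooExp P C V (k + 2) x ≤ lam * tabooExp P C V (k + 1) x :=
          tabooExp_succ_succ_le hC hV hdrift k x
      _ ≤ lam * (lam ^ k * (lam * V x + b)) := by gcongr
      _ = lam ^ (k + 1) * (lam * V x + b) := by rw [pow_succ']; ring

theorem tsum_pow_mul_tabooExp_le [IsSFiniteKernel P] (hC : MeasurableSet C) (hV : Measurable V)
    (hV1 : 1 ≤ V) (hdrift : ∀ x, ∫⁻ y, V y ∂(P x) ≤ lam * V x + b * C.indicator 1 x) {r : ℝ≥0∞}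
    (hlr : lam * r < 1) (x : X) :
    ∑' k, r ^ k * tabooExp P C V k x ≤ (1 + r * b) / (1 - lam * r) * V x :=
  calc ∑' k, r ^ k * tabooExp P C V k x
      = V x + ∑' k, r ^ (k + 1) * tabooExp P C V (k + 1) x := by
        rw [tsum_eq_zero_add' ENNReal.summable, pow_zero, one_mul]; rfl
    _ ≤ V x + ∑' k, r * (lam * V x + b) * (lam * r) ^ k := by
        gcongr V x + ?_
        refine ENNReal.tsum_le_tsum fun k => ?_
        calc r ^ (k + 1) * tabooExp P C V (k + 1) x
            ≤ r ^ (k + 1) * (lam ^ k * (lam * V x + b)) := by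
              gcongr; exact tabooExp_succ_le hC hV hdrift k x
          _ = r * (lam * V x + b) * (lam * r) ^ k := by ring
    _ = V x + r * (lam * V x + b) * (1 - lam * r)⁻¹ := by
        rw [ENNReal.tsum_mul_left, ENNReal.tsum_geometric]
    _ ≤ (1 + r * b) / (1 - lam * r) * V x := add_mul_le_div_mul_of_one_le (hV1 x) hlr

end Taboo

theorem drift_condition_return_time_bound_general
    {X : Type*} [MeasurableSpace X] (P : Kernel X X) [IsMarkovKernel P]
    (V : X → ℝ≥0∞) (hVmeas : Measurable V) (hV1 : ∀ x, 1 ≤ V x)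
    (C : Set X) (hC : MeasurableSet C)
    (lam b : ℝ≥0∞)
    (hdrift : ∀ x, ∫⁻ y, V y ∂(P x) ≤ lam * V x + b * C.indicator 1 x)
    (r : ℝ≥0∞) (hr1 : 1 < r) (hrlam : r < lam⁻¹) (x : X) :
    (expRtau P C r x - 1) / (r - 1) ≤ ∑' k : ℕ, r ^ k * tabooExp P C V k x ∧
      ∑' k : ℕ, r ^ k * tabooExp P C V k x ≤ (1 + r * b) / (1 - lam * r) * V x := by
  have hlr : lam * r < 1 := ENNReal.mul_lt_of_lt_div' (by rwa [one_div])
  refine ⟨?_, tsum_pow_mul_tabooExp_le hC hVmeas hV1 hdrift hlr x⟩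
  calc (expRtau P C r x - 1) / (r - 1) ≤ ∑' k, r ^ k * tabooExp P C 1 k x := by
        refine ENNReal.div_le_of_le_mul ?_
        rw [tsub_le_iff_left, mul_comm]
        exact expRtau_le_one_add_mul_tsum hC hr1 x
    _ ≤ ∑' k, r ^ k * tabooExp P C V k x := by
        gcongr with k
        exact tabooExp_mono hV1 k x

theorem drift_condition_return_time_bound
    {X : Type*} [MeasurableSpace X] (P : Kernel X X) [IsMarkovKernel P]
    (V : X → ℝ≥0∞) (hVmeas : Measurable V) (hV1 : ∀ x, 1 ≤ V x) (hVfin : ∀ x, V x ≠ ∞)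
    (C : Set X) (hC : MeasurableSet C)
    (lam b : ℝ≥0∞) (hlam0 : 0 < lam) (hlam1 : lam < 1) (hb : b ≠ ∞)
    (hdrift : ∀ x, ∫⁻ y, V y ∂(P x) ≤ lam * V x + b * C.indicator 1 x)
    (r : ℝ≥0∞) (hr1 : 1 < r) (hrlam : r < lam⁻¹) (x : X) :
    (expRtau P C r x - 1) / (r - 1) ≤ ∑' k : ℕ, r ^ k * tabooExp P C V k x ∧
      ∑' k : ℕ, r ^ k * tabooExp P C V k x ≤ (1 + r * b) / (1 - lam * r) * V x :=
  drift_condition_return_time_bound_general P V hVmeas hV1 C hC lam b hdrift r hr1 hrlam x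
end

section
/- Let p be an increment distribution with m_p := Σ_{n≥1} n p(n) < ∞, let u be its zero-delay renewal sequence, and let e be its equilibrium delay distribution. Then for every n ≥ 0, the convolution (e * u)(n) := Σ_{k=0}^{n} e(k) u(n−k) equals 1/m_p. In particular, the renewal sequence with equilibrium delay e is identically constant equal to π(1) := 1/m_p. -/
/-!
With the tail `r k = 1 - (p 0 + ⋯ + p k)` one has `p (k + 1) = r k - r (k + 1)`; substituting this
into the renewal equation shows that `c n = ∑_{k ≤ n} r k u (n - k)` satisfies `c (n + 1) = c n`,
and `c 0 = 1`. Since `∑_{j > k} p j = r k`, the convolution `e * u` is `c / m_p = 1 / m_p`.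
-/

open Finset

namespace Renewal

variable {R : Type*} [Ring R] {p u : ℕ → R}

def tail (p : ℕ → R) (k : ℕ) : R := 1 - ∑ j ∈ range (k + 1), p j

theorem tail_zero (hp0 : p 0 = 0) : tail p 0 = 1 := by simp [tail, hp0]

theorem tail_succ (k : ℕ) : tail p (k + 1) = tail p k - p (k + 1) := by
  rw [tail, tail, sum_range_succ, sub_add_eq_sub_sub]

theorem succ_eq_sum_range (hu : ∀ n, 1 ≤ n → u n = ∑ k ∈ Icc 1 n, p k * u (n - k)) (n : ℕ) :
    u (n + 1) = ∑ k ∈ range (n + 1), p (k + 1) * u (n - k) := by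
  rw [hu (n + 1) le_add_self, ← Ico_add_one_right_eq_Icc, sum_Ico_eq_sum_range]
  simp [add_comm 1]

theorem sum_tail_mul_eq_one (hp0 : p 0 = 0) (hu0 : u 0 = 1)
    (hu : ∀ n, 1 ≤ n → u n = ∑ k ∈ Icc 1 n, p k * u (n - k)) (n : ℕ) :
    ∑ k ∈ range (n + 1), tail p k * u (n - k) = 1 := by
  induction n with
  | zero => simp [tail_zero hp0, hu0]
  | succ n ih =>
    calc ∑ k ∈ range (n + 2), tail p k * u (n + 1 - k)
        = ∑ k ∈ range (n + 1), (tail p k - p (k + 1)) * u (n - k) + u (n + 1) := by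
          simp [sum_range_succ' _ (n + 1), tail_zero hp0, tail_succ]
      _ = ∑ k ∈ range (n + 1), tail p k * u (n - k) := by
          rw [succ_eq_sum_range hu]
          simp only [sub_mul, sum_sub_distrib, sub_add_cancel]
      _ = 1 := ih

end Renewal

theorem Summable.tsum_ite_le_eq_tsum_sub_sum_range {G : Type*} [AddCommGroup G]
    [TopologicalSpace G] [IsTopologicalAddGroup G] [T2Space G] {f : ℕ → G} (hf : Summable f)
    (k : ℕ) :
    ∑' j, (if k ≤ j then f j else 0) = ∑' j, f j - ∑ j ∈ range k, f j := by
  rw [← hf.sum_add_tsum_compl (s := range k), add_sub_cancel_left, _root_.tsum_subtype]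
  congr 1 with j
  simp [Set.indicator_apply]

theorem equilibrium_delay_renewal_constant_general
    (p : ℕ → ℝ) (hp0 : p 0 = 0) (hpsum : ∑' n, p n = 1)
    (u : ℕ → ℝ) (hu0 : u 0 = 1)
    (hu : ∀ n, 1 ≤ n → u n = ∑ k ∈ Finset.Icc 1 n, p k * u (n - k))
    (e : ℕ → ℝ)
    (he : ∀ n, e n = (∑' j : ℕ, if n + 1 ≤ j then p j else 0) / ∑' n : ℕ, (n : ℝ) * p n) :
    ∀ n : ℕ, ∑ k ∈ Finset.range (n + 1), e k * u (n - k)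
      = (∑' n : ℕ, (n : ℝ) * p n)⁻¹ := by
  have hp : Summable p := by
    by_contra h
    rw [tsum_eq_zero_of_not_summable h] at hpsum
    exact zero_ne_one hpsum
  have he_tail : ∀ k, e k = Renewal.tail p k / ∑' n : ℕ, (n : ℝ) * p n := fun k => by
    rw [he, hp.tsum_ite_le_eq_tsum_sub_sum_range, hpsum, Renewal.tail]
  intro n
  simp only [he_tail, div_mul_eq_mul_div, ← sum_div, Renewal.sum_tail_mul_eq_one hp0 hu0 hu,
    one_div]

theorem equilibrium_delay_renewal_constant
    (p : ℕ → ℝ) (hp0 : p 0 = 0) (hpnn : ∀ n, 0 ≤ p n) (hpsum : ∑' n, p n = 1)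
    (hmean : Summable fun n : ℕ => (n : ℝ) * p n)
    (u : ℕ → ℝ) (hu0 : u 0 = 1)
    (hu : ∀ n, 1 ≤ n → u n = ∑ k ∈ Finset.Icc 1 n, p k * u (n - k))
    (e : ℕ → ℝ)
    (he : ∀ n, e n = (∑' j : ℕ, if n + 1 ≤ j then p j else 0) / ∑' n : ℕ, (n : ℝ) * p n) :
    ∀ n : ℕ, ∑ k ∈ Finset.range (n + 1), e k * u (n - k)
      = (∑' n : ℕ, (n : ℝ) * p n)⁻¹ :=
  equilibrium_delay_renewal_constant_general p hp0 hpsum u hu0 hu e he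
end

section
/- Let p be an increment distribution and let d, d' be two delay distributions on {0, 1, 2, ...}. On a probability space carrying mutually independent random variables Y₀ ~ d, Y₀' ~ d', and two independent i.i.d. sequences (Y_i)_{i≥1}, (Y_i')_{i≥1} each with law p, define the renewal indicator processes V^d(n) := 1 if Y₀ + Y₁ + ... + Y_j = n for some j ≥ 0 (and 0 otherwise), and V^{d'}(n) analogously from (Y_i'). Let T := min{n ≥ 0 : V^d(n) = V^{d'}(n) = 1} be the first simultaneous renewal time (T = ∞ if there is none). Then for every n ≥ 0, |ℙ{V^d(n) = 1} − ℙ{V^{d'}(n) = 1}| ≤ ℙ{T > n}. -/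
/-!
On the event `T ≤ n` split according to the first common renewal `m ≤ n` and the indices `j, j'`
at which the two processes first reach `m`. That event is determined by `Y₀, …, Y_j` and
`Y'₀, …, Y'_{j'}`, while on it `n` is a renewal of the first process iff `n - m` is a renewal of
the zero-delay process driven by `Y_{j+1}, Y_{j+2}, …`, which is independent of the past and has
a law depending only on `p`. Hence `ℙ{n ∈ R, T = m} = u(n - m) ℙ{T = m} = ℙ{n ∈ R', T = m}`, so
the two renewal probabilities agree on `T ≤ n` and can only differ by `ℙ{T > n}`.
-/

open MeasureTheory ProbabilityTheory Finset

section CoordinateSigmaAlgebras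
variable {Ω ι : Type*} {β : ι → Type*} [mβ : ∀ i, MeasurableSpace (β i)] {f : ∀ i, Ω → β i}

theorem measurable_iSup_comap_comp {κ : Type*} (e : κ → ι) :
    Measurable[⨆ i ∈ Set.range e, (mβ i).comap (f i)] (fun ω k => f (e k) ω) := by
  let _ := ⨆ i ∈ Set.range e, (mβ i).comap (f i)
  exact measurable_pi_iff.2 fun k => (comap_measurable (f (e k))).mono
    (le_iSup₂ (f := fun i _ => (mβ i).comap (f i)) (e k) ⟨k, rfl⟩) le_rfl

theorem measurableSet_iSup_comap_of_finite [∀ i, Countable (β i)]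
    [∀ i, MeasurableSingletonClass (β i)]
    {S : Set ι} (hS : S.Finite) {A : Set Ω}
    (hA : ∀ ω ω', (∀ i ∈ S, f i ω = f i ω') → ω ∈ A → ω' ∈ A) :
    MeasurableSet[⨆ i ∈ S, (mβ i).comap (f i)] A := by
  have := hS.to_subtype
  have hΦ := measurable_iSup_comap_comp (f := f) ((↑) : S → ι)
  rw [Subtype.range_coe] at hΦ
  set Φ : Ω → (i : S) → β i := fun ω i => f i ω
  have : A = Φ ⁻¹' (Φ '' A) := by
    refine (Set.subset_preimage_image _ _).antisymm ?_
    rintro ω ⟨ω', hω', hEq⟩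
    exact hA ω' ω (fun i hi => congrFun hEq ⟨i, hi⟩) hω'
  rw [this]
  exact hΦ (Set.to_countable _).measurableSet

variable [MeasurableSpace Ω] {μ : Measure Ω}

theorem ProbabilityTheory.iIndepFun.measure_inter_eq_mul_of_disjoint (hf : iIndepFun f μ)
    (hmeas : ∀ i, Measurable (f i)) {S T : Set ι} (hST : Disjoint S T) {A B : Set Ω}
    (hA : MeasurableSet[⨆ i ∈ S, (mβ i).comap (f i)] A)
    (hB : MeasurableSet[⨆ i ∈ T, (mβ i).comap (f i)] B) :
    μ (A ∩ B) = μ A * μ B :=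
  (Indep_iff _ _ μ).1 (indep_iSup_of_disjoint (fun i => (hmeas i).comap_le)
    ((iIndepFun_iff_iIndep _ _ _).1 hf) hST) A B hA hB

theorem ProbabilityTheory.iIndepFun.map_comp_eq_infinitePi {γ : Type*} [MeasurableSpace γ]
    {g : ι → Ω → γ} (hf : iIndepFun g μ) (hmeas : ∀ i, Measurable (g i)) {κ : Type*}
    {e : κ → ι} (he : e.Injective) {ν : Measure γ} (hlaw : ∀ k, μ.map (g (e k)) = ν) :
    μ.map (fun ω k => g (e k) ω) = Measure.infinitePi (fun _ : κ => ν) := by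
  rw [(hf.precomp he).map_fun_eq_infinitePi_map (fun k => hmeas _)]
  simp_rw [hlaw]

end CoordinateSigmaAlgebras

theorem MeasureTheory.Measure.map_eq_map_of_measure_preimage_singleton {Ω α : Type*}
    [MeasurableSpace Ω] [MeasurableSpace α] [Countable α] [MeasurableSingletonClass α]
    {μ : Measure Ω} {X X' : Ω → α} (hX : Measurable X) (hX' : Measurable X')
    (h : ∀ a, μ (X ⁻¹' {a}) = μ (X' ⁻¹' {a})) : μ.map X = μ.map X' :=
  Measure.ext_of_singleton fun a => by
    rw [Measure.map_apply hX (measurableSet_singleton a),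
      Measure.map_apply hX' (measurableSet_singleton a), h]

theorem MeasureTheory.abs_measureReal_sub_le_of_measure_inter_eq {Ω : Type*} [MeasurableSpace Ω]
    {μ : Measure Ω} [IsFiniteMeasure μ] {A A' C : Set Ω} (hC : MeasurableSet C)
    (h : μ (A ∩ C) = μ (A' ∩ C)) : |μ.real A - μ.real A'| ≤ μ.real Cᶜ := by
  have hA := measureReal_inter_add_sdiff (μ := μ) (s := A) hC
  have hA' := measureReal_inter_add_sdiff (μ := μ) (s := A') hC
  have hAC : μ.real (A \ C) ≤ μ.real Cᶜ := measureReal_mono (Set.sdiff_subset_compl _ _)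
  have hA'C : μ.real (A' \ C) ≤ μ.real Cᶜ := measureReal_mono (Set.sdiff_subset_compl _ _)
  have hinter : μ.real (A ∩ C) = μ.real (A' ∩ C) := congrArg ENNReal.toReal h
  have hAC₀ : 0 ≤ μ.real (A \ C) := measureReal_nonneg
  have hA'C₀ : 0 ≤ μ.real (A' \ C) := measureReal_nonneg
  rw [abs_sub_le_iff]
  constructor <;> linarith

def renewalTime (x : ℕ → ℕ) (j : ℕ) : ℕ := ∑ i ∈ range (j + 1), x i

def renewalSet (x : ℕ → ℕ) : Set ℕ := Set.range (renewalTime x)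

def zeroDelayRenewalSet (z : ℕ → ℕ) : Set ℕ := Set.range fun k => ∑ i ∈ range k, z i

def IsFirstHit (x : ℕ → ℕ) (m j : ℕ) : Prop :=
  renewalTime x j = m ∧ ∀ l < j, renewalTime x l < m

/-- Only renewal times up to the indices `j`, `j'` enter, so that the corresponding event depends
on finitely many increments. -/
def IsFirstMeeting (x x' : ℕ → ℕ) (m j j' : ℕ) : Prop :=
  IsFirstHit x m j ∧ IsFirstHit x' m j' ∧ ∀ l < j, ∀ l' < j', renewalTime x l ≠ renewalTime x' l'

section Pathwise

variable {x x' z z' : ℕ → ℕ} {m n j j' : ℕ}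

theorem renewalTime_mono (x : ℕ → ℕ) : Monotone (renewalTime x) :=
  monotone_nat_of_le_succ fun j => by simp [renewalTime, sum_range_succ _ (j + 1)]

theorem renewalTime_add (x : ℕ → ℕ) (j k : ℕ) :
    renewalTime x (j + k) = renewalTime x j + ∑ i ∈ range k, x (j + 1 + i) := by
  rw [renewalTime, renewalTime, show j + k + 1 = j + 1 + k by ring, sum_range_add]

theorem renewalTime_congr (h : ∀ i ≤ j, x i = z i) {l : ℕ} (hl : l ≤ j) :
    renewalTime x l = renewalTime z l :=
  sum_congr rfl fun i hi => h i (by grind)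

theorem exists_isFirstHit (h : m ∈ renewalSet x) : ∃ j, IsFirstHit x m j := by
  classical
  refine ⟨Nat.find h, Nat.find_spec h, fun l hl => ?_⟩
  exact (renewalTime_mono x hl.le).trans_eq (Nat.find_spec h) |>.lt_of_ne (Nat.find_min h hl)

theorem IsFirstHit.unique {j₂ : ℕ} (h : IsFirstHit x m j) (h₂ : IsFirstHit x m j₂) : j = j₂ := by
  by_contra hne
  rcases Nat.lt_or_gt_of_ne hne with hlt | hlt
  · exact (h₂.2 j hlt).ne h.1
  · exact (h.2 j₂ hlt).ne h₂.1

theorem IsFirstHit.lt_of_renewalTime_lt (h : IsFirstHit x m j) {l : ℕ} (hl : renewalTime x l < m) :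
    l < j := by
  by_contra! hjl
  exact (renewalTime_mono x hjl).not_gt (h.1 ▸ hl)

theorem isLeast_inter_renewalSet_iff :
    IsLeast (renewalSet x ∩ renewalSet x') m ↔ ∃ j j', IsFirstMeeting x x' m j j' := by
  constructor
  · rintro ⟨⟨hm, hm'⟩, hleast⟩
    obtain ⟨j, hj⟩ := exists_isFirstHit hm
    obtain ⟨j', hj'⟩ := exists_isFirstHit hm'
    refine ⟨j, j', hj, hj', fun l hl l' hl' heq => ?_⟩
    exact (hleast ⟨⟨l, rfl⟩, ⟨l', heq.symm⟩⟩).not_gt (hj.2 l hl)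
  · rintro ⟨j, j', hj, hj', hne⟩
    refine ⟨⟨⟨j, hj.1⟩, ⟨j', hj'.1⟩⟩, ?_⟩
    rintro _ ⟨⟨l, rfl⟩, ⟨l', hl'⟩⟩
    by_contra! hlt
    exact hne l (hj.lt_of_renewalTime_lt hlt) l' (hj'.lt_of_renewalTime_lt (hl' ▸ hlt)) hl'.symm

theorem IsFirstMeeting.congr (h : IsFirstMeeting x x' m j j') (hz : ∀ i ≤ j, x i = z i)
    (hz' : ∀ i ≤ j', x' i = z' i) : IsFirstMeeting z z' m j j' := by
  obtain ⟨⟨hj, hlt⟩, ⟨hj', hlt'⟩, hne⟩ := h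
  rw [renewalTime_congr hz le_rfl] at hj
  rw [renewalTime_congr hz' le_rfl] at hj'
  refine ⟨⟨hj, fun l hl => ?_⟩, ⟨hj', fun l hl => ?_⟩, fun l hl l' hl' => ?_⟩
  · rw [← renewalTime_congr hz hl.le]; exact hlt l hl
  · rw [← renewalTime_congr hz' hl.le]; exact hlt' l hl
  · rw [← renewalTime_congr hz hl.le, ← renewalTime_congr hz' hl'.le]; exact hne l hl l' hl'

theorem mem_renewalSet_iff_sub_mem_zeroDelayRenewalSet (hj : renewalTime x j = m) (hmn : m ≤ n) :
    n ∈ renewalSet x ↔ n - m ∈ zeroDelayRenewalSet fun i => x (j + 1 + i) := by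
  constructor
  · rintro ⟨l, rfl⟩
    rcases le_or_gt l j with hlj | hjl
    · refine ⟨0, ?_⟩
      have := renewalTime_mono x hlj
      simp only [range_zero, sum_empty]; omega
    · obtain ⟨k, rfl⟩ := Nat.exists_eq_add_of_le hjl.le
      refine ⟨k, ?_⟩
      dsimp only
      rw [renewalTime_add, hj]; omega
  · rintro ⟨k, hk⟩
    dsimp only at hk
    refine ⟨j + k, ?_⟩
    rw [renewalTime_add, hj, hk]; omega

theorem natCast_lt_sInf_iff (s : Set ℕ) (n : ℕ) :
    (n : ℕ∞) < sInf {e : ℕ∞ | ∃ m : ℕ, e = (m : ℕ∞) ∧ m ∈ s} ↔ ∀ m ≤ n, ¬ IsLeast s m := by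
  constructor
  · rintro h m hmn hm
    have : (n : ℕ∞) < m := h.trans_le (sInf_le ⟨m, rfl, hm.1⟩)
    exact hmn.not_gt (by exact_mod_cast this)
  · intro h
    rw [← ENat.add_one_le_iff (ENat.natCast_ne_top n)]
    refine le_sInf ?_
    rintro _ ⟨m, rfl, hm⟩
    by_contra! hmn
    have hleast : IsLeast s (sInf s) := ⟨Nat.sInf_mem ⟨m, hm⟩, fun _ => Nat.sInf_le⟩
    exact h _ ((Nat.sInf_le hm).trans (by exact_mod_cast Order.le_of_lt_add_one hmn)) hleast

end Pathwise

noncomputable def zeroDelayRenewalProb (ν : Measure ℕ) (r : ℕ) : ENNReal :=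
  Measure.infinitePi (fun _ : ℕ => ν) {z | r ∈ zeroDelayRenewalSet z}

theorem measurableSet_setOf_mem_zeroDelayRenewalSet (r : ℕ) :
    MeasurableSet {z : ℕ → ℕ | r ∈ zeroDelayRenewalSet z} := by
  simp only [zeroDelayRenewalSet, Set.mem_range, Set.ofPred_exists]
  exact MeasurableSet.iUnion fun k =>
    measurableSet_eq_fun (Finset.measurable_sum _ fun i _ => measurable_pi_apply i) measurable_const

section Coupling

variable {Ω : Type*} {Y Y' : ℕ → Ω → ℕ}

theorem measurableSet_iSup_comap_setOf_isFirstMeeting (m j j' : ℕ) :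
    MeasurableSet[⨆ i ∈ Sum.inl '' Set.Iic j ∪ Sum.inr '' Set.Iic j',
        MeasurableSpace.comap (Sum.elim Y Y' i) inferInstance]
      {ω | IsFirstMeeting (Y · ω) (Y' · ω) m j j'} :=
  measurableSet_iSup_comap_of_finite
    (((Set.finite_Iic j).image _).union ((Set.finite_Iic j').image _))
    fun _ _ h hω => hω.congr (fun i hi => h _ (Or.inl ⟨i, hi, rfl⟩))
      (fun i hi => h _ (Or.inr ⟨i, hi, rfl⟩))

theorem setOf_isLeast_eq_iUnion (m : ℕ) :
    {ω | IsLeast (renewalSet (Y · ω) ∩ renewalSet (Y' · ω)) m} =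
      ⋃ t : ℕ × ℕ, {ω | IsFirstMeeting (Y · ω) (Y' · ω) m t.1 t.2} := by
  ext ω
  simp [isLeast_inter_renewalSet_iff]

theorem pairwise_disjoint_setOf_isFirstMeeting (m : ℕ) :
    Pairwise (Function.onFun Disjoint
      fun t : ℕ × ℕ => {ω | IsFirstMeeting (Y · ω) (Y' · ω) m t.1 t.2}) := by
  rintro ⟨j₁, j₁'⟩ ⟨j₂, j₂'⟩ hne
  refine Set.disjoint_left.2 fun ω (h₁ : IsFirstMeeting _ _ m j₁ j₁') h₂ => hne ?_
  rw [h₁.1.unique h₂.1, h₁.2.1.unique h₂.2.1]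

variable [MeasurableSpace Ω] {μ : Measure Ω}

theorem measurableSet_setOf_mem_renewalSet (hY : ∀ i, Measurable (Y i)) (n : ℕ) :
    MeasurableSet {ω | n ∈ renewalSet (Y · ω)} := by
  simp only [renewalSet, renewalTime, Set.mem_range, Set.ofPred_exists]
  exact MeasurableSet.iUnion fun j =>
    measurableSet_eq_fun (Finset.measurable_sum _ fun i _ => hY i) measurable_const

theorem measurableSet_setOf_isFirstMeeting (hY : ∀ i, Measurable (Y i))
    (hY' : ∀ i, Measurable (Y' i)) (m j j' : ℕ) :
    MeasurableSet {ω | IsFirstMeeting (Y · ω) (Y' · ω) m j j'} :=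
  have hle : (⨆ i ∈ Sum.inl '' Set.Iic j ∪ Sum.inr '' Set.Iic j',
      MeasurableSpace.comap (Sum.elim Y Y' i) inferInstance) ≤ ‹MeasurableSpace Ω› :=
    iSup₂_le fun i _ => (Sum.forall.2 ⟨hY, hY'⟩ : ∀ i, Measurable (Sum.elim Y Y' i)) i |>.comap_le
  hle _ (measurableSet_iSup_comap_setOf_isFirstMeeting m j j')

theorem measure_mem_renewalSet_inter_isFirstMeeting (hY : ∀ i, Measurable (Y i))
    (hY' : ∀ i, Measurable (Y' i)) (hindep : iIndepFun (Sum.elim Y Y') μ) {ν : Measure ℕ}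
    (hlaw : ∀ i, μ.map (Y (i + 1)) = ν) {m n : ℕ} (hmn : m ≤ n) (j j' : ℕ) :
    μ ({ω | n ∈ renewalSet (Y · ω)} ∩ {ω | IsFirstMeeting (Y · ω) (Y' · ω) m j j'}) =
      zeroDelayRenewalProb ν (n - m) * μ {ω | IsFirstMeeting (Y · ω) (Y' · ω) m j j'} := by
  have hmeas : ∀ i, Measurable (Sum.elim Y Y' i) := Sum.forall.2 ⟨hY, hY'⟩
  let e : ℕ → ℕ ⊕ ℕ := fun i => Sum.inl (j + 1 + i)
  have he : e.Injective := fun a b h => by simpa [e] using h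
  let B := (fun ω i => Sum.elim Y Y' (e i) ω) ⁻¹' {z | n - m ∈ zeroDelayRenewalSet z}
  have hB : μ B = zeroDelayRenewalProb ν (n - m) := by
    rw [← Measure.map_apply (measurable_pi_lambda _ fun i => hmeas _)
      (measurableSet_setOf_mem_zeroDelayRenewalSet _),
      hindep.map_comp_eq_infinitePi hmeas he fun i => by
        simpa [e, add_right_comm] using hlaw (j + i)]
    rfl
  have hfuture : {ω | n ∈ renewalSet (Y · ω)} ∩ {ω | IsFirstMeeting (Y · ω) (Y' · ω) m j j'} =
      B ∩ {ω | IsFirstMeeting (Y · ω) (Y' · ω) m j j'} := by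
    ext ω
    exact and_congr_left fun hω => mem_renewalSet_iff_sub_mem_zeroDelayRenewalSet hω.1.1 hmn
  have hdisj : Disjoint (Set.range e) (Sum.inl '' Set.Iic j ∪ Sum.inr '' Set.Iic j') := by
    rw [Set.disjoint_left]
    rintro _ ⟨i, rfl⟩ (⟨l, hl, h⟩ | ⟨l, -, h⟩)
    · simp only [Sum.inl.injEq, e] at h
      simp only [Set.mem_Iic] at hl
      omega
    · exact Sum.inr_ne_inl h
  rw [hfuture, hindep.measure_inter_eq_mul_of_disjoint hmeas hdisj
    (measurable_iSup_comap_comp e (measurableSet_setOf_mem_zeroDelayRenewalSet _))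
    (measurableSet_iSup_comap_setOf_isFirstMeeting m j j'), hB]

theorem measurableSet_setOf_isLeast (hY : ∀ i, Measurable (Y i))
    (hY' : ∀ i, Measurable (Y' i)) (m : ℕ) :
    MeasurableSet {ω | IsLeast (renewalSet (Y · ω) ∩ renewalSet (Y' · ω)) m} := by
  rw [setOf_isLeast_eq_iUnion]
  exact MeasurableSet.iUnion fun t => measurableSet_setOf_isFirstMeeting hY hY' m t.1 t.2

theorem measure_mem_renewalSet_inter_isLeast (hY : ∀ i, Measurable (Y i))
    (hY' : ∀ i, Measurable (Y' i)) (hindep : iIndepFun (Sum.elim Y Y') μ) {ν : Measure ℕ}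
    (hlaw : ∀ i, μ.map (Y (i + 1)) = ν) {m n : ℕ} (hmn : m ≤ n) :
    μ ({ω | n ∈ renewalSet (Y · ω)} ∩ {ω | IsLeast (renewalSet (Y · ω) ∩ renewalSet (Y' · ω)) m}) =
      zeroDelayRenewalProb ν (n - m) *
        μ {ω | IsLeast (renewalSet (Y · ω) ∩ renewalSet (Y' · ω)) m} := by
  have hE := measurableSet_setOf_isFirstMeeting hY hY' m
  have hdisj := pairwise_disjoint_setOf_isFirstMeeting (Y := Y) (Y' := Y') m
  rw [setOf_isLeast_eq_iUnion, Set.inter_iUnion, measure_iUnion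
      (fun _ _ h => (hdisj h).mono Set.inter_subset_right Set.inter_subset_right)
      (fun t => (measurableSet_setOf_mem_renewalSet hY n).inter (hE t.1 t.2)),
    measure_iUnion hdisj (fun t => hE t.1 t.2), ← ENNReal.tsum_mul_left]
  exact tsum_congr fun t =>
    measure_mem_renewalSet_inter_isFirstMeeting hY hY' hindep hlaw hmn t.1 t.2

theorem measure_mem_renewalSet_inter_iUnion_isLeast (hY : ∀ i, Measurable (Y i))
    (hY' : ∀ i, Measurable (Y' i)) (hindep : iIndepFun (Sum.elim Y Y') μ) {ν : Measure ℕ}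
    (hlaw : ∀ i, μ.map (Y (i + 1)) = ν) (n : ℕ) :
    μ ({ω | n ∈ renewalSet (Y · ω)} ∩
        ⋃ m ∈ range (n + 1), {ω | IsLeast (renewalSet (Y · ω) ∩ renewalSet (Y' · ω)) m}) =
      ∑ m ∈ range (n + 1), zeroDelayRenewalProb ν (n - m) *
        μ {ω | IsLeast (renewalSet (Y · ω) ∩ renewalSet (Y' · ω)) m} := by
  have hdisj : (range (n + 1) : Set ℕ).PairwiseDisjoint
      fun m => {ω | IsLeast (renewalSet (Y · ω) ∩ renewalSet (Y' · ω)) m} :=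
    fun m _ m' _ hne => Set.disjoint_left.2 fun ω hm hm' => hne (IsLeast.unique hm hm')
  rw [Set.inter_iUnion₂, measure_biUnion_finset (hdisj.mono fun m => Set.inter_subset_right)
    fun m _ => (measurableSet_setOf_mem_renewalSet hY n).inter
      (measurableSet_setOf_isLeast hY hY' m)]
  exact sum_congr rfl fun m hm =>
    measure_mem_renewalSet_inter_isLeast hY hY' hindep hlaw (Nat.lt_succ_iff.1 (mem_range.1 hm))

end Coupling

theorem renewal_coupling_inequality_general
    {Ω : Type*} [MeasurableSpace Ω] (Pr : Measure Ω) [IsProbabilityMeasure Pr]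
    (p : ℕ → ℝ)
    (Y Y' : ℕ → Ω → ℕ)
    (hYmeas : ∀ i, Measurable (Y i)) (hY'meas : ∀ i, Measurable (Y' i))
    (hindep : iIndepFun (Sum.elim Y Y') Pr)
    (hYlaw : ∀ i, 1 ≤ i → ∀ k, Pr (Y i ⁻¹' {k}) = ENNReal.ofReal (p k))
    (hY'law : ∀ i, 1 ≤ i → ∀ k, Pr (Y' i ⁻¹' {k}) = ENNReal.ofReal (p k))
    -- the renewal sets of the two renewal processes
    (R R' : Ω → Set ℕ)
    (hR : ∀ ω, R ω = {n | ∃ j : ℕ, ∑ i ∈ Finset.range (j + 1), Y i ω = n})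
    (hR' : ∀ ω, R' ω = {n | ∃ j : ℕ, ∑ i ∈ Finset.range (j + 1), Y' i ω = n})
    -- the first simultaneous renewal time, valued in ℕ∞
    (T : Ω → ℕ∞)
    (hT : ∀ ω, T ω = sInf {e : ℕ∞ | ∃ m : ℕ, e = (m : ℕ∞) ∧ m ∈ R ω ∧ m ∈ R' ω}) :
    ∀ n : ℕ,
      |(Pr {ω | n ∈ R ω}).toReal - (Pr {ω | n ∈ R' ω}).toReal|
        ≤ (Pr {ω | (n : ℕ∞) < T ω}).toReal := by
  intro n
  obtain rfl : R = fun ω => renewalSet (Y · ω) := funext hR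
  obtain rfl : R' = fun ω => renewalSet (Y' · ω) := funext hR'
  let C := ⋃ m ∈ range (n + 1), {ω | IsLeast (renewalSet (Y · ω) ∩ renewalSet (Y' · ω)) m}
  have hTC : {ω | (n : ℕ∞) < T ω} = Cᶜ := by
    ext ω
    simp [C, hT, ← Set.mem_inter_iff, natCast_lt_sInf_iff]
  have hlaw : ∀ i, Pr.map (Y (i + 1)) = Pr.map (Y 1) := fun i =>
    Measure.map_eq_map_of_measure_preimage_singleton (hYmeas _) (hYmeas 1) fun k => by
      rw [hYlaw _ (by omega), hYlaw 1 le_rfl]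
  have hlaw' : ∀ i, Pr.map (Y' (i + 1)) = Pr.map (Y 1) := fun i =>
    Measure.map_eq_map_of_measure_preimage_singleton (hY'meas _) (hYmeas 1) fun k => by
      rw [hY'law _ (by omega), hYlaw 1 le_rfl]
  have hindep' : iIndepFun (Sum.elim Y' Y) Pr := by
    rw [← Sum.elim_swap]
    exact hindep.precomp (g := Sum.swap) Sum.swap_leftInverse.injective
  rw [hTC]
  refine abs_measureReal_sub_le_of_measure_inter_eq
    (.biUnion (range (n + 1)).countable_toSet fun m _ =>
      measurableSet_setOf_isLeast hYmeas hY'meas m) ?_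
  have hC : C = ⋃ m ∈ range (n + 1),
      {ω | IsLeast (renewalSet (Y' · ω) ∩ renewalSet (Y · ω)) m} := by
    simp only [C, Set.inter_comm]
  rw [measure_mem_renewalSet_inter_iUnion_isLeast hYmeas hY'meas hindep hlaw, hC,
    measure_mem_renewalSet_inter_iUnion_isLeast hY'meas hYmeas hindep' hlaw']
  simp only [Set.inter_comm]

theorem renewal_coupling_inequality
    {Ω : Type*} [MeasurableSpace Ω] (Pr : Measure Ω) [IsProbabilityMeasure Pr]
    (p : ℕ → ℝ) (hp0 : p 0 = 0) (hpnn : ∀ n, 0 ≤ p n) (hpsum : ∑' n, p n = 1)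
    (d d' : ℕ → ℝ) (hdnn : ∀ n, 0 ≤ d n) (hdsum : ∑' n, d n = 1)
    (hd'nn : ∀ n, 0 ≤ d' n) (hd'sum : ∑' n, d' n = 1)
    (Y Y' : ℕ → Ω → ℕ)
    (hYmeas : ∀ i, Measurable (Y i)) (hY'meas : ∀ i, Measurable (Y' i))
    (hindep : iIndepFun (Sum.elim Y Y') Pr)
    (hY0law : ∀ k, Pr (Y 0 ⁻¹' {k}) = ENNReal.ofReal (d k))
    (hY'0law : ∀ k, Pr (Y' 0 ⁻¹' {k}) = ENNReal.ofReal (d' k))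
    (hYlaw : ∀ i, 1 ≤ i → ∀ k, Pr (Y i ⁻¹' {k}) = ENNReal.ofReal (p k))
    (hY'law : ∀ i, 1 ≤ i → ∀ k, Pr (Y' i ⁻¹' {k}) = ENNReal.ofReal (p k))
    -- the renewal sets of the two renewal processes
    (R R' : Ω → Set ℕ)
    (hR : ∀ ω, R ω = {n | ∃ j : ℕ, ∑ i ∈ Finset.range (j + 1), Y i ω = n})
    (hR' : ∀ ω, R' ω = {n | ∃ j : ℕ, ∑ i ∈ Finset.range (j + 1), Y' i ω = n})
    -- the first simultaneous renewal time, valued in ℕ∞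
    (T : Ω → ℕ∞)
    (hT : ∀ ω, T ω = sInf {e : ℕ∞ | ∃ m : ℕ, e = (m : ℕ∞) ∧ m ∈ R ω ∧ m ∈ R' ω}) :
    ∀ n : ℕ,
      |(Pr {ω | n ∈ R ω}).toReal - (Pr {ω | n ∈ R' ω}).toReal|
        ≤ (Pr {ω | (n : ℕ∞) < T ω}).toReal :=
  renewal_coupling_inequality_general Pr p Y Y' hYmeas hY'meas hindep hYlaw hY'law R R' hR hR' T hT
end

section
/- Let P be a Markov transition kernel on (X, 𝓑), let U ∈ 𝓑, 0 < δ ≤ 1, and let μ be a probability measure with μ(U) = 1 such that P(x, B) ≥ δ μ(B) for all x ∈ U, B ∈ 𝓑. Let P̂ be the associated δ/2-split kernel on X × {0,1}. Then for every x ∈ U: P̂(x₁, U₁) = δ/2 and P̂(x₀, U₁) ≥ δ²/(2(2−δ)); in particular, P̂(z, U₁) ≥ δ²/(2(2−δ)) for all z ∈ U₀ ∪ U₁, so from every point of U₀ ∪ U₁ the split chain enters the atom U₁ in one step with probability at least δ²/(2(2−δ)). -/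
/-!
Statement 10: properties of the `δ/2`-split kernel. Given a Markov kernel `P`, a small set
`U` with `P(x,·) ≥ δ μ(·)` on `U` and `μ(U) = 1` (`0 < δ ≤ 1`), the split kernel `P̂` on
`X × {0,1}` satisfies, for every `x ∈ U`: `P̂(x₁, U₁) = δ/2` and
`P̂(x₀, U₁) ≥ δ²/(2(2-δ))`; in particular `P̂(z, U₁) ≥ δ²/(2(2-δ))` for every
`z ∈ U₀ ∪ U₁`.

`{0,1}` is modelled by `Bool` (`false ↔ 0`, `true ↔ 1`). `splitMeasure U δ λ` is the split
`λ*` of a measure `λ`, and `splitKernel P U μ δ` is the split kernel `P̂`, given pointwise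
by the defining formulas (with truncated subtraction of measures on `U₀`, which agrees with
the intended difference since `2P* ≥ δμ*` there).
-/

open MeasureTheory ProbabilityTheory ENNReal
open scoped Classical

/-- The split `λ*` of a measure `λ`: `λ*(A₀) = (1-δ/2)λ(A∩U) + λ(A∩Uᶜ)`,
`λ*(A₁) = (δ/2)λ(A∩U)`. -/
noncomputable def splitMeasure {X : Type*} [MeasurableSpace X] (U : Set X) (δ : ℝ≥0∞)
    (lam : Measure X) : Measure (X × Bool) :=
  (1 - δ / 2) • ((lam.restrict U).map (fun x => (x, false)))
    + (lam.restrict Uᶜ).map (fun x => (x, false))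
    + (δ / 2) • ((lam.restrict U).map (fun x => (x, true)))

/-- The `δ/2`-split kernel `P̂` on `X × Bool`. -/
noncomputable def splitKernel {X : Type*} [MeasurableSpace X] (P : Kernel X X) (U : Set X)
    (μ : Measure X) (δ : ℝ≥0∞) : X × Bool → Measure (X × Bool) := fun z =>
  if z.2 = true then splitMeasure U δ μ
  else if z.1 ∈ U then
    (2 - δ)⁻¹ • (2 • splitMeasure U δ (P z.1) - δ • splitMeasure U δ μ)
  else splitMeasure U δ (P z.1)

/-!
From `x₁` the split chain moves by `μ*`, which puts mass `(δ/2)μ(U) = δ/2` on `U₁`. From `x₀` with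
`x ∈ U` it moves by `(2P*(x,·) - δμ*)/(2 - δ)`, whose mass on `U₁` is
`(δ P(x,U) - δ²/2)/(2 - δ) ≥ (δ² - δ²/2)/(2 - δ)` because the minorization gives `P(x,U) ≥ δ μ(U) = δ`.
The truncated subtraction of measures is an honest one here, since the minorization also gives
`δμ* ≤ P*(x,·) ≤ 2P*(x,·)`. Finally `δ²/(2(2-δ)) ≤ δ/2` as `δ ≤ 1`.
-/

section SplitMeasure

variable {X : Type*} [MeasurableSpace X] {U : Set X} {δ : ℝ≥0∞}

lemma splitMeasure_apply_atom (hU : MeasurableSet U) (lam : Measure X) :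
    splitMeasure U δ lam (U ×ˢ {true}) = δ / 2 * lam U := by
  have hA : MeasurableSet (U ×ˢ ({true} : Set Bool)) := hU.prod (measurableSet_singleton _)
  have hfalse : (fun x : X => (x, false)) ⁻¹' (U ×ˢ {true}) = ∅ := by ext; simp
  have htrue : (fun x : X => (x, true)) ⁻¹' (U ×ˢ {true}) = U := by ext; simp
  simp only [splitMeasure, Measure.coe_add, Pi.add_apply, Measure.smul_apply, smul_eq_mul]
  rw [Measure.map_apply (by fun_prop) hA, Measure.map_apply (by fun_prop) hA,
    Measure.map_apply (by fun_prop) hA, hfalse, htrue, Measure.restrict_apply hU]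
  simp

lemma splitMeasure_smul (c : ℝ≥0∞) (lam : Measure X) :
    splitMeasure U δ (c • lam) = c • splitMeasure U δ lam := by
  simp only [splitMeasure, Measure.restrict_smul, Measure.map_smul, smul_add, smul_comm c]

lemma splitMeasure_mono {lam nu : Measure X} (h : lam ≤ nu) :
    splitMeasure U δ lam ≤ splitMeasure U δ nu := by
  unfold splitMeasure
  gcongr <;> fun_prop

lemma isFiniteMeasure_splitMeasure (hδ : δ ≠ ∞) (lam : Measure X) [IsFiniteMeasure lam] :
    IsFiniteMeasure (splitMeasure U δ lam) := by
  have := Measure.smul_finite ((lam.restrict U).map (fun x => (x, false)))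
    (ne_top_of_le_ne_top one_ne_top (tsub_le_self : 1 - δ / 2 ≤ 1))
  have := Measure.smul_finite ((lam.restrict U).map (fun x => (x, true)))
    (div_ne_top hδ two_ne_zero)
  unfold splitMeasure
  infer_instance

end SplitMeasure

section SplitKernel

variable {X : Type*} [MeasurableSpace X] {P : Kernel X X} {U : Set X} {μ : Measure X}
  {δ : ℝ≥0∞}

lemma splitKernel_apply_true (x : X) : splitKernel P U μ δ (x, true) = splitMeasure U δ μ :=
  if_pos rfl

lemma splitKernel_apply_false_of_mem {x : X} (hx : x ∈ U) :
    splitKernel P U μ δ (x, false) =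
      (2 - δ)⁻¹ • (2 • splitMeasure U δ (P x) - δ • splitMeasure U δ μ) := by
  simp [splitKernel, hx]

lemma splitKernel_false_apply_atom [IsFiniteMeasure μ] (hU : MeasurableSet U) (hδ : δ ≠ ∞)
    {x : X} (hx : x ∈ U) (hminor : δ • μ ≤ P x) :
    splitKernel P U μ δ (x, false) (U ×ˢ {true}) =
      (2 - δ)⁻¹ * (δ * P x U - δ * (δ / 2 * μ U)) := by
  have := isFiniteMeasure_splitMeasure (U := U) hδ μ
  have := Measure.smul_finite (splitMeasure U δ μ) hδ
  have hle : δ • splitMeasure U δ μ ≤ 2 • splitMeasure U δ (P x) :=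
    calc δ • splitMeasure U δ μ = splitMeasure U δ (δ • μ) := (splitMeasure_smul δ μ).symm
      _ ≤ splitMeasure U δ (P x) := splitMeasure_mono hminor
      _ ≤ 2 • splitMeasure U δ (P x) := by
        rw [two_smul]; exact Measure.le_add_right le_rfl
  have htwo : 2 * (δ / 2 * P x U) = δ * P x U := by
    rw [← mul_assoc, ENNReal.mul_div_cancel two_ne_zero ofNat_ne_top]
  rw [splitKernel_apply_false_of_mem hx, Measure.smul_apply, smul_eq_mul,
    Measure.sub_apply (hU.prod (measurableSet_singleton _)) hle]
  simp only [Measure.smul_apply, smul_eq_mul, nsmul_eq_mul, Nat.cast_ofNat,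
    splitMeasure_apply_atom hU, htwo]

end SplitKernel

lemma sq_div_two_mul_two_sub_le_half {δ : ℝ≥0∞} (hδ : δ ≤ 1) :
    δ ^ 2 / (2 * (2 - δ)) ≤ δ / 2 := by
  have hone : 1 ≤ 2 - δ := ENNReal.le_sub_of_add_le_left (ne_top_of_le_ne_top one_ne_top hδ)
    ((add_le_add_left hδ 1).trans_eq one_add_one_eq_two)
  calc δ ^ 2 / (2 * (2 - δ)) ≤ δ ^ 2 / 2 :=
        ENNReal.div_le_div_left (le_mul_of_one_le_right' hone) _
    _ ≤ δ / 2 := by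
        gcongr
        calc δ ^ 2 = δ * δ := sq δ
          _ ≤ 1 * δ := by gcongr
          _ = δ := one_mul δ

lemma sq_div_two_mul_two_sub_le {δ p : ℝ≥0∞} (hδ : δ ≠ ∞) (hp : δ ≤ p) :
    δ ^ 2 / (2 * (2 - δ)) ≤ (2 - δ)⁻¹ * (δ * p - δ * (δ / 2)) := by
  have hsplit : δ ^ 2 / (2 * (2 - δ)) = (2 - δ)⁻¹ * (δ * δ - δ * δ / 2) := by
    rw [ENNReal.sub_half (mul_ne_top hδ hδ), div_eq_mul_inv, div_eq_mul_inv,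
      ENNReal.mul_inv (Or.inl two_ne_zero) (Or.inl ofNat_ne_top), sq]
    ring
  rw [hsplit, ← mul_div_assoc]
  gcongr

theorem split_kernel_hits_atom_general
    {X : Type*} [MeasurableSpace X] (P : Kernel X X)
    (U : Set X) (hU : MeasurableSet U)
    (δ : ℝ≥0∞) (hδ1 : δ ≤ 1)
    (μ : Measure X) [IsProbabilityMeasure μ] (hμU : μ U = 1)
    (hsmall : ∀ x ∈ U, ∀ B : Set X, MeasurableSet B → δ * μ B ≤ P x B) :
    (∀ x ∈ U,
        splitKernel P U μ δ (x, true) (U ×ˢ ({true} : Set Bool)) = δ / 2 ∧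
        δ ^ 2 / (2 * (2 - δ)) ≤ splitKernel P U μ δ (x, false) (U ×ˢ ({true} : Set Bool))) ∧
      ∀ z ∈ (U ×ˢ ({false} : Set Bool)) ∪ (U ×ˢ ({true} : Set Bool)),
        δ ^ 2 / (2 * (2 - δ)) ≤ splitKernel P U μ δ z (U ×ˢ ({true} : Set Bool)) := by
  have hδ : δ ≠ ∞ := ne_top_of_le_ne_top one_ne_top hδ1
  have htrue (x : X) : splitKernel P U μ δ (x, true) (U ×ˢ {true}) = δ / 2 := by
    rw [splitKernel_apply_true, splitMeasure_apply_atom hU, hμU, mul_one]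
  have hfalse (x : X) (hx : x ∈ U) :
      δ ^ 2 / (2 * (2 - δ)) ≤ splitKernel P U μ δ (x, false) (U ×ˢ {true}) := by
    have hminor : δ • μ ≤ P x :=
      Measure.le_iff.2 fun B hB => by simpa using hsmall x hx B hB
    have hPU : δ ≤ P x U := by simpa [hμU] using hsmall x hx U hU
    rw [splitKernel_false_apply_atom hU hδ hx hminor, hμU, mul_one]
    exact sq_div_two_mul_two_sub_le hδ hPU
  refine ⟨fun x hx => ⟨htrue x, hfalse x hx⟩, ?_⟩
  rintro ⟨x, _ | _⟩ hz
  · exact hfalse x (by simpa using hz)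
  · exact (htrue x).symm ▸ sq_div_two_mul_two_sub_le_half hδ1

theorem split_kernel_hits_atom
    {X : Type*} [MeasurableSpace X] (P : Kernel X X) [IsMarkovKernel P]
    (U : Set X) (hU : MeasurableSet U)
    (δ : ℝ≥0∞) (hδ0 : 0 < δ) (hδ1 : δ ≤ 1)
    (μ : Measure X) [IsProbabilityMeasure μ] (hμU : μ U = 1)
    (hsmall : ∀ x ∈ U, ∀ B : Set X, MeasurableSet B → δ * μ B ≤ P x B) :
    (∀ x ∈ U,
        splitKernel P U μ δ (x, true) (U ×ˢ ({true} : Set Bool)) = δ / 2 ∧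
        δ ^ 2 / (2 * (2 - δ)) ≤ splitKernel P U μ δ (x, false) (U ×ˢ ({true} : Set Bool))) ∧
      ∀ z ∈ (U ×ˢ ({false} : Set Bool)) ∪ (U ×ˢ ({true} : Set Bool)),
        δ ^ 2 / (2 * (2 - δ)) ≤ splitKernel P U μ δ z (U ×ˢ ({true} : Set Bool)) :=
  split_kernel_hits_atom_general P U hU δ hδ1 μ hμU hsmall
end

section
/- Let P be a Markov transition kernel on (X, 𝓑) and B ∈ 𝓑, with taboo probabilities ₍B₎P^n defined inductively by ₍B₎P¹ = P and ₍B₎P^{n+1}(x, A) = ∫_{B^c} ₍B₎P^n(x, dy) P(y, A). Then the first-entrance–last-exit (regenerative) decomposition holds: for all x ∈ X, A ∈ 𝓑, and n ≥ 1, P^n(x, A) = ₍B₎P^n(x, A) + Σ_{j=1}^{n−1} Σ_{k=1}^{j} ∫_B ∫_B ₍B₎P^k(x, dv) P^{j−k}(v, dw) ₍B₎P^{n−j}(w, A), where P^0(v, ·) := δ_v. -/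
/-!
Work with kernels rather than with numbers: kernel composition `∘ₖ` distributes over `+` on both
sides, and `κ = κ|_B + κ|_{Bᶜ}`. Splitting according to whether the state before the final step
lies in `B` gives, by induction, the first-entrance decomposition
`Pⁿ = ₍B₎Pⁿ + Σₖ P^{n-k} ∘ₖ (₍B₎Pᵏ)|_B` and the last-exit decomposition
`Pᵐ = ₍B₎Pᵐ + Σᵢ ₍B₎P^{m-i} ∘ₖ (Pⁱ)|_B`. Substituting the second into the first yields the double
sum; its diagonal terms `j = k` are the last exits at time `0`, whence the `P⁰ = δ`.
-/

open MeasureTheory ProbabilityTheory ENNReal Finset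

/-- The `n`-step transition kernel `P^n` (with `P⁰ = id`, i.e. `P⁰(x,·) = δ_x`). -/
noncomputable def nstep {X : Type*} [MeasurableSpace X] (P : Kernel X X) : ℕ → Kernel X X
  | 0 => Kernel.id
  | n + 1 => P ∘ₖ nstep P n

/-- The taboo kernels `₍B₎Pⁿ`. -/
noncomputable def tabooKernel {X : Type*} [MeasurableSpace X] (P : Kernel X X) {B : Set X}
    (hB : MeasurableSet B) : ℕ → Kernel X X
  | 0 => Kernel.id
  | 1 => P
  | n + 2 => P ∘ₖ (tabooKernel P hB (n + 1)).restrict hB.compl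

namespace ProbabilityTheory.Kernel

variable {α β γ δ : Type*} {mα : MeasurableSpace α} {mβ : MeasurableSpace β}
  {mγ : MeasurableSpace γ} {mδ : MeasurableSpace δ}

lemma comp_finsetSum_right {ι : Type*} (s : Finset ι) (κ : ι → Kernel α β) (η : Kernel β γ) :
    η ∘ₖ ∑ i ∈ s, κ i = ∑ i ∈ s, η ∘ₖ κ i := by
  classical
  induction s using Finset.induction_on with
  | empty => simp
  | insert i s hi ih => rw [sum_insert hi, sum_insert hi, comp_add_right, ih]

lemma comp_finsetSum_left {ι : Type*} (s : Finset ι) (κ : Kernel α β) (η : ι → Kernel β γ) :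
    (∑ i ∈ s, η i) ∘ₖ κ = ∑ i ∈ s, η i ∘ₖ κ := by
  classical
  induction s using Finset.induction_on with
  | empty => simp
  | insert i s hi ih => rw [sum_insert hi, sum_insert hi, comp_add_left, ih]

lemma id_restrict_comp {s : Set β} (hs : MeasurableSet s) (κ : Kernel α β) :
    Kernel.id.restrict hs ∘ₖ κ = κ.restrict hs := by
  rw [comp_restrict, id_comp]

lemma restrict_add {s : Set β} (hs : MeasurableSet s) (κ η : Kernel α β) :
    (κ + η).restrict hs = κ.restrict hs + η.restrict hs := by
  rw [← id_restrict_comp, comp_add_right, id_restrict_comp, id_restrict_comp]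

lemma restrict_finsetSum {ι : Type*} {s : Set β} (hs : MeasurableSet s) (t : Finset ι)
    (κ : ι → Kernel α β) : (∑ i ∈ t, κ i).restrict hs = ∑ i ∈ t, (κ i).restrict hs := by
  rw [← id_restrict_comp, comp_finsetSum_right]
  simp only [id_restrict_comp]

lemma restrict_restrict_self {s : Set β} (hs : MeasurableSet s) (κ : Kernel α β) :
    (κ.restrict hs).restrict hs = κ.restrict hs := by
  ext a t ht
  simp [restrict_apply, Measure.restrict_restrict hs]

lemma restrict_add_restrict_compl {s : Set β} (hs : MeasurableSet s) (κ : Kernel α β) :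
    κ.restrict hs + κ.restrict hs.compl = κ := by
  ext a t ht
  simp [restrict_apply, Measure.restrict_add_restrict_compl hs]

lemma comp_eq_comp_restrict_compl_add {s : Set β} (hs : MeasurableSet s) (η : Kernel β γ)
    (κ : Kernel α β) : η ∘ₖ κ = η ∘ₖ κ.restrict hs.compl + η ∘ₖ κ.restrict hs := by
  rw [← comp_add_right, add_comm, restrict_add_restrict_compl]

lemma comp_restrict_comp_restrict_apply {s : Set β} (hs : MeasurableSet s) {t : Set γ}
    (ht : MeasurableSet t) (η : Kernel γ δ) (κ : Kernel β γ) (ξ : Kernel α β) (a : α) {u : Set δ}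
    (hu : MeasurableSet u) :
    (η ∘ₖ κ.restrict ht ∘ₖ ξ.restrict hs) a u = ∫⁻ v in s, ∫⁻ w in t, η w u ∂κ v ∂ξ a := by
  simp [comp_apply' _ _ _ hu, restrict_apply]

end ProbabilityTheory.Kernel

section Decomposition

variable {X : Type*} [MeasurableSpace X] (P : Kernel X X) {B : Set X} (hB : MeasurableSet B)

lemma nstep_succ (n : ℕ) : nstep P (n + 1) = P ∘ₖ nstep P n := rfl

lemma tabooKernel_add_two (n : ℕ) :
    tabooKernel P hB (n + 2) = P ∘ₖ (tabooKernel P hB (n + 1)).restrict hB.compl := rfl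

lemma nstep_one : nstep P 1 = P := Kernel.comp_id P

lemma nstep_first_entrance (n : ℕ) :
    nstep P (n + 1) = tabooKernel P hB (n + 1)
      + ∑ k ∈ Icc 1 n, nstep P (n + 1 - k) ∘ₖ (tabooKernel P hB k).restrict hB := by
  induction n with
  | zero => simp [nstep_one, tabooKernel]
  | succ n ih =>
    rw [nstep_succ, ih, Kernel.comp_add_right, Kernel.comp_finsetSum_right,
      Kernel.comp_eq_comp_restrict_compl_add hB, ← tabooKernel_add_two,
      sum_Icc_succ_top (by omega), Nat.add_sub_cancel_left, nstep_one, add_assoc,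
      add_comm (_ ∘ₖ _)]
    congr 2
    refine sum_congr rfl fun k hk => ?_
    rw [← Kernel.comp_assoc, ← nstep_succ, show n + 1 + 1 - k = n + 1 - k + 1 by grind]

lemma nstep_last_exit (n : ℕ) :
    nstep P (n + 1) = tabooKernel P hB (n + 1)
      + ∑ i ∈ Icc 1 n, tabooKernel P hB (n + 1 - i) ∘ₖ (nstep P i).restrict hB := by
  induction n with
  | zero => simp [nstep_one, tabooKernel]
  | succ n ih =>
    rw [nstep_succ, Kernel.comp_eq_comp_restrict_compl_add hB, sum_Icc_succ_top (by omega),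
      Nat.add_sub_cancel_left, ← add_assoc]
    congr 1
    rw [ih, Kernel.restrict_add, Kernel.restrict_finsetSum, Kernel.comp_add_right,
      Kernel.comp_finsetSum_right, ← tabooKernel_add_two]
    congr 1
    refine sum_congr rfl fun i hi => ?_
    rw [← Kernel.comp_restrict, ← Kernel.comp_assoc, show n + 1 + 1 - i = n - i + 2 by grind,
      show n + 1 - i = n - i + 1 by grind, tabooKernel_add_two]

lemma nstep_comp_restrict_last_exit {k n : ℕ} (hk : k ≤ n) (κ : Kernel X X) :
    nstep P (n + 1 - k) ∘ₖ κ.restrict hB = ∑ j ∈ Icc k n,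
      tabooKernel P hB (n + 1 - j) ∘ₖ (nstep P (j - k)).restrict hB ∘ₖ κ.restrict hB := by
  obtain ⟨m, rfl⟩ := Nat.exists_eq_add_of_le hk
  have h_first : tabooKernel P hB (m + 1) ∘ₖ κ.restrict hB
      = tabooKernel P hB (k + m + 1 - k) ∘ₖ (nstep P (k - k)).restrict hB ∘ₖ κ.restrict hB := by
    rw [Nat.sub_self, Kernel.comp_assoc, nstep, Kernel.id_restrict_comp,
      Kernel.restrict_restrict_self, show k + m + 1 - k = m + 1 by omega]
  rw [show k + m + 1 - k = m + 1 by omega, nstep_last_exit P hB, Kernel.comp_add_left,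
    Kernel.comp_finsetSum_left, Icc_eq_cons_Ioc hk, sum_cons, h_first]
  congr 1
  refine sum_nbij' (· + k) (· - k) (by grind) (by grind) (by grind) (by grind) fun i _ => ?_
  rw [Nat.add_sub_cancel, show k + m + 1 - (i + k) = m + 1 - i by omega]

lemma nstep_regenerative (n : ℕ) :
    nstep P (n + 1) = tabooKernel P hB (n + 1) + ∑ j ∈ Icc 1 n, ∑ k ∈ Icc 1 j,
      tabooKernel P hB (n + 1 - j) ∘ₖ (nstep P (j - k)).restrict hB
        ∘ₖ (tabooKernel P hB k).restrict hB := by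
  rw [nstep_first_entrance P hB,
    sum_congr rfl fun k hk => nstep_comp_restrict_last_exit P hB (mem_Icc.1 hk).2 _,
    sum_comm' (t' := Icc 1 n) (s' := fun j => Icc 1 j) fun k j => by grind]

end Decomposition

theorem regenerative_decomposition_general
    {X : Type*} [MeasurableSpace X] (P : Kernel X X)
    {B : Set X} (hB : MeasurableSet B)
    (x : X) (A : Set X) (hA : MeasurableSet A) (n : ℕ) :
    nstep P n x A
      = tabooKernel P hB n x A
        + ∑ j ∈ Finset.Icc 1 (n - 1), ∑ k ∈ Finset.Icc 1 j,
            ∫⁻ v in B, ∫⁻ w in B,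
              tabooKernel P hB (n - j) w A ∂(nstep P (j - k) v) ∂(tabooKernel P hB k x) := by
  cases n with
  | zero => simp [nstep, tabooKernel]
  | succ n =>
    simp only [nstep_regenerative P hB n, FunLike.coe_add, Pi.add_apply, Measure.coe_add,
      Kernel.finsetSum_apply', Kernel.comp_restrict_comp_restrict_apply hB hB _ _ _ _ hA,
      Nat.add_sub_cancel]

theorem regenerative_decomposition
    {X : Type*} [MeasurableSpace X] (P : Kernel X X) [IsMarkovKernel P]
    {B : Set X} (hB : MeasurableSet B)
    (x : X) (A : Set X) (hA : MeasurableSet A) (n : ℕ) (hn : 1 ≤ n) :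
    nstep P n x A
      = tabooKernel P hB n x A
        + ∑ j ∈ Finset.Icc 1 (n - 1), ∑ k ∈ Finset.Icc 1 j,
            ∫⁻ v in B, ∫⁻ w in B,
              tabooKernel P hB (n - j) w A ∂(nstep P (j - k) v) ∂(tabooKernel P hB k x) :=
  regenerative_decomposition_general P hB x A hA n
end
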